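/- arXiv:1911.11945 — 9 statements merged into one kernel-verified Lean document; each statement's English description precedes it below -/
import Mathlib

section
/- If the endpoints of a line segment of length ℓ in the plane are each moved by a distance at most r, where r < ℓ/2, then the angle between the original segment's direction and the new segment's direction is at most arcsin(2r/ℓ). -/
open Real
open scoped RealInnerProductSpace

/-- If the endpoints of a segment of length ℓ in the plane are each moved by at most r < ℓ/2,
the direction of the segment rotates by at most arcsin(2r/ℓ). -/
theorem stmt_0 (p q p' q' : EuclideanSpace ℝ (Fin 2)) (ℓ r : ℝ)
    (hl : dist p q = ℓ) (hr0 : 0 ≤ r) (hr : r < ℓ / 2)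
    (hp : dist p p' ≤ r) (hq : dist q q' ≤ r) :
    InnerProductGeometry.angle (q - p) (q' - p') ≤ Real.arcsin (2 * r / ℓ) := by
  set u := q - p with hu_def
  set v := q' - p' with hv_def
  have hℓ : 0 < ℓ := by linarith
  have hu : ‖u‖ = ℓ := by
    rw [hu_def, ← dist_eq_norm, dist_comm]; exact hl
  have huv : ‖u - v‖ ≤ 2 * r := by
    have h1 : u - v = (q - q') - (p - p') := by rw [hu_def, hv_def]; abel
    rw [h1]
    calc ‖(q - q') - (p - p')‖ ≤ ‖q - q'‖ + ‖p - p'‖ := norm_sub_le _ _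
      _ ≤ r + r := by
          rw [← dist_eq_norm, ← dist_eq_norm]; exact add_le_add hq hp
      _ = 2 * r := by ring
  have hv : 0 < ‖v‖ := by
    have := norm_sub_norm_le u v
    linarith [norm_nonneg (u - v)]
  have hc : (0:ℝ) < ⟪u, v⟫ := by
    have h1 : ⟪u, u - v⟫ = ⟪u, u⟫ - ⟪u, v⟫ := inner_sub_right u u v
    have h2 : ⟪u, u - v⟫ ≤ ‖u‖ * ‖u - v‖ := real_inner_le_norm u (u - v)
    have h3 : ⟪u, u⟫ = ℓ * ℓ := by rw [real_inner_self_eq_norm_mul_norm, hu]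
    have h4 : ‖u‖ * ‖u - v‖ ≤ ℓ * (2 * r) := by
      rw [hu]; exact mul_le_mul_of_nonneg_left huv hℓ.le
    nlinarith
  -- angle ≤ π/2
  have hangle_le : InnerProductGeometry.angle u v ≤ π / 2 := by
    rw [InnerProductGeometry.angle, Real.arccos_le_pi_div_two]
    positivity
  have hangle0 : 0 ≤ InnerProductGeometry.angle u v := InnerProductGeometry.angle_nonneg u v
  -- sin bound
  have hsin : Real.sin (InnerProductGeometry.angle u v) ≤ 2 * r / ℓ := by
    have hkey := InnerProductGeometry.sin_angle_mul_norm_mul_norm u v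
    have hsq : ⟪u, u⟫ * ⟪v, v⟫ - ⟪u, v⟫ * ⟪u, v⟫ ≤ (2 * r) ^ 2 * ‖v‖ ^ 2 := by
      have e1 : ⟪u, u⟫ = ‖u‖ ^ 2 := real_inner_self_eq_norm_sq u
      have e2 : ⟪v, v⟫ = ‖v‖ ^ 2 := real_inner_self_eq_norm_sq v
      have e3 : ‖u - v‖ ^ 2 = ‖u‖ ^ 2 - 2 * ⟪u, v⟫ + ‖v‖ ^ 2 := by
        rw [← real_inner_self_eq_norm_sq, inner_sub_sub_self,
          real_inner_self_eq_norm_sq, real_inner_self_eq_norm_sq, real_inner_comm]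
        ring
      have e4 : ‖u - v‖ ^ 2 ≤ (2 * r) ^ 2 :=
        pow_le_pow_left₀ (norm_nonneg _) huv 2
      nlinarith [sq_nonneg (⟪u, v⟫ - ‖v‖ ^ 2)]
    have hsqrt : √(⟪u, u⟫ * ⟪v, v⟫ - ⟪u, v⟫ * ⟪u, v⟫) ≤ 2 * r * ‖v‖ := by
      rw [show (2 * r) ^ 2 * ‖v‖ ^ 2 = (2 * r * ‖v‖) ^ 2 by ring] at hsq
      calc √(⟪u, u⟫ * ⟪v, v⟫ - ⟪u, v⟫ * ⟪u, v⟫) ≤ √((2 * r * ‖v‖) ^ 2) :=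
            Real.sqrt_le_sqrt hsq
        _ = 2 * r * ‖v‖ := Real.sqrt_sq (by positivity)
    rw [hu] at hkey
    rw [le_div_iff₀ hℓ]
    nlinarith [hkey, hsqrt, hv]
  calc InnerProductGeometry.angle u v
      = Real.arcsin (Real.sin (InnerProductGeometry.angle u v)) := by
        rw [Real.arcsin_sin (by linarith [Real.pi_pos]) hangle_le]
    _ ≤ Real.arcsin (2 * r / ℓ) := Real.monotone_arcsin hsin
end

section
/- In a triangle with vertices a, b, c in the plane, if the angle at c (i.e., ∠acb) lies strictly between 28° and 180° − 28°, then the distance from c to the line through a and b is at least sin(14°) · min(|ac|, |bc|). -/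
/-!
The distance from `c` to the line `ab` is `sin (∠ c a b) * |ca|`, and likewise
`sin (∠ c b a) * |cb|`. The two base angles sum to `π - ∠ a c b ∈ (28°, 152°)`, so the larger
of them lies in `(14°, 152°)` and its sine is at least `sin 14°`.
-/

open Real EuclideanGeometry

theorem Real.sin_le_sin_of_mem_Icc {θ x : ℝ} (hθ : -(π / 2) ≤ θ) (hθx : θ ≤ x)
    (hxθ : x ≤ π - θ) : sin θ ≤ sin x := by
  rcases le_total x (π / 2) with hx | hx
  · exact sin_le_sin_of_le_of_le_pi_div_two hθ hx hθx
  · rw [← sin_pi_sub x]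
    exact sin_le_sin_of_le_of_le_pi_div_two hθ (by linarith) (by linarith)

namespace InnerProductGeometry

open scoped InnerProductSpace

variable {V : Type*} [NormedAddCommGroup V] [InnerProductSpace ℝ V]

theorem sin_angle_mul_norm_le_norm_sub_smul (v w : V) (t : ℝ) :
    sin (angle v w) * ‖v‖ ≤ ‖v - t • w‖ := by
  rcases eq_or_ne w 0 with rfl | hw
  · simp
  have hw' : 0 < ‖w‖ := norm_pos_iff.2 hw
  -- Lagrange: `‖v‖²‖w‖² - ⟪v, w⟫² = ‖v - t • w‖²‖w‖² - (⟪v, w⟫ - t‖w‖²)²`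
  have hgram : ⟪v, v⟫_ℝ * ⟪w, w⟫_ℝ - ⟪v, w⟫_ℝ * ⟪v, w⟫_ℝ ≤ (‖v - t • w‖ * ‖w‖) ^ 2 := by
    rw [mul_pow, norm_sub_sq_real, real_inner_smul_right, norm_smul, real_inner_self_eq_norm_sq,
      real_inner_self_eq_norm_sq, mul_pow, Real.norm_eq_abs, sq_abs]
    nlinarith [sq_nonneg (t * ‖w‖ ^ 2 - ⟪v, w⟫_ℝ)]
  refine le_of_mul_le_mul_right ?_ hw'
  calc sin (angle v w) * ‖v‖ * ‖w‖
      = √(⟪v, v⟫_ℝ * ⟪w, w⟫_ℝ - ⟪v, w⟫_ℝ * ⟪v, w⟫_ℝ) := by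
        rw [mul_assoc, sin_angle_mul_norm_mul_norm]
    _ ≤ √((‖v - t • w‖ * ‖w‖) ^ 2) := Real.sqrt_le_sqrt hgram
    _ = ‖v - t • w‖ * ‖w‖ := Real.sqrt_sq (by positivity)

end InnerProductGeometry

namespace EuclideanGeometry

variable {V P : Type*} [NormedAddCommGroup V] [InnerProductSpace ℝ V] [MetricSpace P]
  [NormedAddTorsor V P]

theorem sin_angle_mul_dist_le_dist_of_mem_affineSpan_pair {a b c x : P}
    (hx : x ∈ line[ℝ, a, b]) : sin (∠ c a b) * dist c a ≤ dist c x := by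
  rw [← vsub_vadd x a, vadd_left_mem_affineSpan_pair] at hx
  obtain ⟨r, hr⟩ := hx
  have hcx : c -ᵥ x = (c -ᵥ a) - r • (b -ᵥ a) := by
    rw [hr, vsub_sub_vsub_cancel_right]
  rw [dist_eq_norm_vsub V c x, hcx, dist_eq_norm_vsub V c a]
  exact InnerProductGeometry.sin_angle_mul_norm_le_norm_sub_smul _ _ r

theorem sin_angle_mul_dist_le_infDist (a b c : P) :
    sin (∠ c a b) * dist c a ≤ Metric.infDist c (line[ℝ, a, b] : Set P) :=
  (Metric.le_infDist ⟨a, left_mem_affineSpan_pair ℝ a b⟩).2 fun _ hx ↦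
    sin_angle_mul_dist_le_dist_of_mem_affineSpan_pair hx

theorem sin_mul_dist_le_infDist_of_angle_mem_Icc {a b c : P} {θ : ℝ} (hθ : 0 ≤ θ)
    (hθa : θ ≤ ∠ c a b) (haθ : ∠ c a b ≤ π - θ) :
    sin θ * dist c a ≤ Metric.infDist c (line[ℝ, a, b] : Set P) := by
  refine le_trans ?_ (sin_angle_mul_dist_le_infDist a b c)
  gcongr
  exact sin_le_sin_of_mem_Icc (by linarith [pi_pos]) hθa haθ

theorem sin_mul_min_dist_le_infDist {a b c : P} {θ : ℝ} (hθ : 0 ≤ θ) (hθc : 2 * θ < ∠ a c b)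
    (hcθ : ∠ a c b < π - 2 * θ) :
    sin θ * min (dist a c) (dist b c) ≤ Metric.infDist c (line[ℝ, a, b] : Set P) := by
  rcases eq_or_ne a c with rfl | hac
  · simp [Metric.infDist_nonneg]
  have hsum : ∠ c a b + ∠ c b a + ∠ a c b = π := by
    rw [← angle_add_angle_add_angle_eq_pi b hac, angle_comm b c a, angle_comm a b c]
  have hsin : 0 ≤ sin θ := sin_nonneg_of_nonneg_of_le_pi hθ (by linarith [angle_le_pi a c b])
  have hA := angle_nonneg c a b
  have hB := angle_nonneg c b a
  -- The larger of the two base angles lies in `[θ, π - θ]`.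
  rcases le_total (∠ c b a) (∠ c a b) with hBA | hAB
  · calc sin θ * min (dist a c) (dist b c) ≤ sin θ * dist c a := by
          gcongr; exact dist_comm a c ▸ min_le_left _ _
      _ ≤ _ := sin_mul_dist_le_infDist_of_angle_mem_Icc hθ (by linarith) (by linarith)
  · rw [Set.pair_comm]
    calc sin θ * min (dist a c) (dist b c) ≤ sin θ * dist c b := by
          gcongr; exact dist_comm b c ▸ min_le_right _ _
      _ ≤ _ := sin_mul_dist_le_infDist_of_angle_mem_Icc hθ (by linarith) (by linarith)

end EuclideanGeometry

theorem stmt_1_general (a b c : EuclideanSpace ℝ (Fin 2))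
    (h1 : 28 * π / 180 < EuclideanGeometry.angle a c b)
    (h2 : EuclideanGeometry.angle a c b < π - 28 * π / 180) :
    Real.sin (14 * π / 180) * min (dist a c) (dist b c) ≤
      Metric.infDist c (affineSpan ℝ ({a, b} : Set (EuclideanSpace ℝ (Fin 2))) : Set (EuclideanSpace ℝ (Fin 2))) :=
  sin_mul_min_dist_le_infDist (by positivity) (by linarith) (by linarith)

/-- In a nondegenerate triangle a b c with 28° < ∠acb < 180° − 28°, the distance from c to
the line through a and b is at least sin(14°)·min(|ac|,|bc|). -/
theorem stmt_1 (a b c : EuclideanSpace ℝ (Fin 2))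
    (hindep : AffineIndependent ℝ ![a, b, c])
    (h1 : 28 * π / 180 < EuclideanGeometry.angle a c b)
    (h2 : EuclideanGeometry.angle a c b < π - 28 * π / 180) :
    Real.sin (14 * π / 180) * min (dist a c) (dist b c) ≤
      Metric.infDist c (affineSpan ℝ ({a, b} : Set (EuclideanSpace ℝ (Fin 2))) : Set (EuclideanSpace ℝ (Fin 2))) :=
  stmt_1_general a b c h1 h2
end

section
/- Let m, n be distinct points in the plane with |mn| = r, and let l¹_m, l²_m be rays from m and l¹_n, l²_n rays from n such that: the angle between l¹_m and l²_m is at least 28°, the angle between l¹_n and l²_n is at least 28°, the four pairwise intersection points u = l¹_m ∩ l¹_n, v = l¹_m ∩ l²_n, x = l²_m ∩ l²_n, y = l²_m ∩ l¹_n exist and form a convex quadrilateral uvxy, and the angle ∠(n,u,m) = θ with the additional hypotheses ∠unm ≥ 28° and ∠umn ≥ 28°. Then the area of the quadrilateral uvxy is at least (1/2)·r²·sin(28°)⁶ / sin(θ). -/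
/-!
The quadrilateral contains the triangle `uvy`. Since `v` lies on the line `mu` and `y` on the
line `nu`, this triangle has area `|uv| |uy| sin θ / 2`. In triangle `unv` the angle at `n` is
at least `28°`, so the sine rule gives `|uv| ≥ sin 28° · |un|` (if that angle exceeds `152°`, it
is obtuse and `|uv| ≥ |un|` outright); likewise `|uy| ≥ sin 28° · |um|`. In triangle `umn` both base angles lie
in `[28°, 152°]`, so the sine rule gives `|un| sin θ ≥ r sin 28°` and `|um| sin θ ≥ r sin 28°`.
Multiplying, the area is at least `r² sin⁴ 28° / (2 sin θ)`.
-/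

open Real EuclideanGeometry MeasureTheory
open scoped Pointwise

lemma mem_convexHull_zero_of_add_le_one {V : Type*} [AddCommGroup V] [Module ℝ V] {a b : V}
    {s t : ℝ} (hs : 0 ≤ s) (ht : 0 ≤ t) (hst : s + t ≤ 1) :
    s • a + t • b ∈ convexHull ℝ ({0, a, b} : Set V) := by
  have h := Finset.centerMass_mem_convexHull (Finset.univ : Finset (Fin 3))
    (w := ![1 - s - t, s, t]) (z := ![0, a, b]) (s := ({0, a, b} : Set V))
    (by intro i _; fin_cases i <;> simp <;> linarith)
    (by simp [Fin.sum_univ_three]; linarith)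
    (by intro i _; fin_cases i <;> simp)
  have h1 : (1:ℝ) - s - t + s + t = 1 := by ring
  simpa [Finset.centerMass, Fin.sum_univ_three, h1] using h

lemma volume_parallelepiped_pair (a b : EuclideanSpace ℝ (Fin 2)) :
    volume (parallelepiped ![a, b]) = ENNReal.ofReal |a 0 * b 1 - a 1 * b 0| := by
  rw [← (EuclideanSpace.basisFun (Fin 2) ℝ).addHaar_eq_volume, Measure.addHaar_parallelepiped,
    Module.Basis.det_apply, Matrix.det_fin_two]
  simp only [Module.Basis.toMatrix_apply, OrthonormalBasis.coe_toBasis_repr_apply,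
    EuclideanSpace.basisFun_repr]
  simp [mul_comm]

lemma parallelepiped_pair_subset (a b : EuclideanSpace ℝ (Fin 2)) :
    parallelepiped ![a, b] ⊆
      convexHull ℝ {0, a, b} ∪ ((a + b) +ᵥ (-1 : ℝ) • convexHull ℝ {0, a, b}) := by
  intro z hz
  obtain ⟨t, ⟨ht0, ht1⟩, rfl⟩ := (mem_parallelepiped_iff _ _).1 hz
  have h0 := ht0 0; have h1 := ht0 1; have h0' := ht1 0; have h1' := ht1 1
  simp only [Pi.zero_apply, Pi.one_apply] at h0 h1 h0' h1'
  simp only [Fin.sum_univ_two, Matrix.cons_val_zero, Matrix.cons_val_one]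
  rcases le_total (t 0 + t 1) 1 with hle | hge
  · exact Or.inl (mem_convexHull_zero_of_add_le_one h0 h1 hle)
  · right
    have hmem := mem_convexHull_zero_of_add_le_one (a := a) (b := b) (sub_nonneg.2 h0')
      (sub_nonneg.2 h1') (by linarith)
    convert Set.vadd_mem_vadd_set (a := a + b) (Set.smul_mem_smul_set (a := (-1 : ℝ)) hmem) using 1
    simp only [vadd_eq_add, sub_smul, one_smul, smul_add, smul_sub, neg_smul, one_smul]
    abel

lemma ofReal_abs_det_div_two_le_volume_convexHull (p a b : EuclideanSpace ℝ (Fin 2)) :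
    ENNReal.ofReal (|a 0 * b 1 - a 1 * b 0| / 2) ≤ volume (convexHull ℝ {p, p + a, p + b}) := by
  have htri : convexHull ℝ {p, p + a, p + b} = p +ᵥ convexHull ℝ {0, a, b} := by
    rw [← convexHull_vadd]
    simp [Set.vadd_set_insert, vadd_eq_add]
  have hpar := (measure_mono (parallelepiped_pair_subset a b)).trans
    (measure_union_le (μ := volume) _ _)
  rw [volume_parallelepiped_pair, measure_vadd, Measure.addHaar_smul] at hpar
  simp only [finrank_euclideanSpace, Fintype.card_fin, even_two, Even.neg_pow, one_pow, abs_one,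
    ENNReal.ofReal_one, one_mul] at hpar
  rw [htri, measure_vadd, ENNReal.ofReal_div_of_pos two_pos, ENNReal.ofReal_ofNat]
  rwa [ENNReal.div_le_iff (by norm_num) (by norm_num), mul_two]

lemma abs_det_eq_norm_mul_norm_mul_sin_angle (a b : EuclideanSpace ℝ (Fin 2)) :
    |a 0 * b 1 - a 1 * b 0| = ‖a‖ * ‖b‖ * sin (InnerProductGeometry.angle a b) := by
  rw [mul_comm (‖a‖ * ‖b‖), InnerProductGeometry.sin_angle_mul_norm_mul_norm, ← sqrt_sq_eq_abs]
  congr 1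
  simp only [PiLp.inner_apply, RCLike.inner_apply, conj_trivial, Fin.sum_univ_two]
  ring

lemma ofReal_dist_mul_dist_mul_sin_angle_div_two_le_volume_convexHull
    (p q r : EuclideanSpace ℝ (Fin 2)) :
    ENNReal.ofReal (dist p q * dist p r * sin (∠ q p r) / 2) ≤
      volume (convexHull ℝ {p, q, r}) := by
  have h := ofReal_abs_det_div_two_le_volume_convexHull p (q - p) (r - p)
  rwa [add_sub_cancel, add_sub_cancel, abs_det_eq_norm_mul_norm_mul_sin_angle, ← dist_eq_norm,
    ← dist_eq_norm, dist_comm q, dist_comm r] at h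

lemma Real.sin_le_sin_of_le_of_le_pi_sub {s x : ℝ} (hs0 : 0 ≤ s) (hs : s ≤ π / 2) (hsx : s ≤ x)
    (hxs : x ≤ π - s) : sin s ≤ sin x := by
  rcases le_total x (π / 2) with h | h
  · exact sin_le_sin_of_le_of_le_pi_div_two (by linarith) h hsx
  · rw [← sin_pi_sub x]
    exact sin_le_sin_of_le_of_le_pi_div_two (by linarith) (by linarith) (by linarith)

namespace InnerProductGeometry

variable {V : Type*} [NormedAddCommGroup V] [InnerProductSpace ℝ V]

lemma sin_angle_smul_left {c : ℝ} (hc : c ≠ 0) (x y : V) :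
    sin (angle (c • x) y) = sin (angle x y) := by
  rcases hc.lt_or_gt with hc | hc
  · rw [angle_smul_left_of_neg x y hc, angle_neg_left, sin_pi_sub]
  · rw [angle_smul_left_of_pos x y hc]

lemma sin_angle_smul_smul {c d : ℝ} (hc : c ≠ 0) (hd : d ≠ 0) (x y : V) :
    sin (angle (c • x) (d • y)) = sin (angle x y) := by
  rw [sin_angle_smul_left hc, angle_comm, sin_angle_smul_left hd, angle_comm]

end InnerProductGeometry

namespace EuclideanGeometry

variable {V P : Type*} [NormedAddCommGroup V] [InnerProductSpace ℝ V] [MetricSpace P]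
  [NormedAddTorsor V P]

lemma ne_of_angle_pos {p₁ p₂ p₃ : P} (h : 0 < ∠ p₁ p₂ p₃) (h₃₂ : p₃ ≠ p₂) : p₁ ≠ p₃ := by
  rintro rfl
  rw [angle_self_of_ne h₃₂] at h
  exact h.false

lemma sin_angle_mul_dist_le_dist (u n v : P) : sin (∠ u n v) * dist u n ≤ dist u v := by
  have h := law_sin v n u
  rw [angle_comm, dist_comm n u] at h
  rw [h]
  exact mul_le_of_le_one_left dist_nonneg (sin_le_one _)

lemma dist_le_dist_of_pi_div_two_le_angle {u n v : P} (h : π / 2 ≤ ∠ u n v) :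
    dist u n ≤ dist u v := by
  have hcos : cos (∠ u n v) ≤ 0 :=
    cos_nonpos_of_pi_div_two_le_of_le h (by linarith [angle_le_pi u n v, pi_pos])
  refine (mul_self_le_mul_self_iff dist_nonneg dist_nonneg).2 ?_
  rw [law_cos u n v]
  nlinarith [mul_nonneg (mul_nonneg (dist_nonneg (x := u) (y := n))
    (dist_nonneg (x := v) (y := n))) (neg_nonneg.2 hcos), mul_self_nonneg (dist v n)]

lemma sin_mul_dist_le_dist_of_le_angle {α : ℝ} {u n v : P} (hα0 : 0 ≤ α) (hα : α ≤ π / 2)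
    (h : α ≤ ∠ u n v) : sin α * dist u n ≤ dist u v := by
  rcases le_total (∠ u n v) (π - α) with hle | hge
  · calc sin α * dist u n ≤ sin (∠ u n v) * dist u n :=
          mul_le_mul_of_nonneg_right (sin_le_sin_of_le_of_le_pi_sub hα0 hα h hle) dist_nonneg
      _ ≤ dist u v := sin_angle_mul_dist_le_dist u n v
  · exact (mul_le_of_le_one_left dist_nonneg (sin_le_one α)).trans
      (dist_le_dist_of_pi_div_two_le_angle (by linarith))

lemma sin_mul_dist_le_sin_angle_mul_dist {α : ℝ} {u m n : P} (hmn : m ≠ n) (hα0 : 0 ≤ α)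
    (hα : α ≤ π / 2) (hm : α ≤ ∠ u m n) (hn : α ≤ ∠ u n m) :
    sin α * dist m n ≤ sin (∠ m u n) * dist u n := by
  have hsum := angle_add_angle_add_angle_eq_pi u hmn.symm
  rw [angle_comm m n u, angle_comm n u m] at hsum
  have h := law_sin m u n
  rw [angle_comm n m u, dist_comm n m] at h
  rw [h]
  exact mul_le_mul_of_nonneg_right
    (sin_le_sin_of_le_of_le_pi_sub hα0 hα hm (by linarith [angle_nonneg m u n])) dist_nonneg

lemma sin_pow_four_mul_dist_sq_le {α : ℝ} {m n u v y : P} (hmn : m ≠ n) (hα0 : 0 ≤ α)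
    (hα : α ≤ π / 2) (hm : α ≤ ∠ u m y) (hn : α ≤ ∠ u n v) (hunm : α ≤ ∠ u n m)
    (humn : α ≤ ∠ u m n) :
    sin α ^ 4 * dist m n ^ 2 ≤ dist u v * dist u y * sin (∠ n u m) ^ 2 := by
  have hv := sin_mul_dist_le_dist_of_le_angle hα0 hα hn
  have hy := sin_mul_dist_le_dist_of_le_angle hα0 hα hm
  have hun := sin_mul_dist_le_sin_angle_mul_dist hmn hα0 hα humn hunm
  have hum := sin_mul_dist_le_sin_angle_mul_dist hmn.symm hα0 hα hunm humn
  rw [angle_comm] at hun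
  rw [dist_comm n m] at hum
  have hS := sin_nonneg_of_nonneg_of_le_pi hα0 (by linarith [pi_pos])
  have hθ := sin_nonneg_of_nonneg_of_le_pi (angle_nonneg n u m) (angle_le_pi n u m)
  calc sin α ^ 4 * dist m n ^ 2 = sin α ^ 2 * ((sin α * dist m n) * (sin α * dist m n)) := by ring
    _ ≤ sin α ^ 2 * ((sin (∠ n u m) * dist u n) * (sin (∠ n u m) * dist u m)) := by gcongr
    _ = (sin α * dist u n) * (sin α * dist u m) * sin (∠ n u m) ^ 2 := by ring
    _ ≤ dist u v * dist u y * sin (∠ n u m) ^ 2 := by gcongr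

end EuclideanGeometry

lemma SameRay.exists_ne_zero_sub_eq_smul {V : Type*} [AddCommGroup V] [Module ℝ V] {m u v : V}
    (h : SameRay ℝ (u - m) (v - m)) (hum : u ≠ m) (hvu : v ≠ u) :
    ∃ c : ℝ, c ≠ 0 ∧ v - u = c • (m - u) := by
  obtain ⟨c, -, hc⟩ := h.exists_nonneg_left (sub_ne_zero.2 hum)
  have hvu' : v - u = (1 - c) • (m - u) := by
    rw [show v - u = (v - m) - (u - m) by abel, ← hc]
    simp only [sub_smul, one_smul, smul_sub]
    abel
  refine ⟨1 - c, fun hc1 => hvu ?_, hvu'⟩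
  rwa [hc1, zero_smul, sub_eq_zero] at hvu'

lemma EuclideanGeometry.sin_angle_eq_of_sameRay {V : Type*} [NormedAddCommGroup V]
    [InnerProductSpace ℝ V] {m n u v y : V} (hv : SameRay ℝ (u - m) (v - m))
    (hy : SameRay ℝ (u - n) (y - n)) (hum : u ≠ m) (hun : u ≠ n) (hvu : v ≠ u) (hyu : y ≠ u) :
    sin (∠ v u y) = sin (∠ m u n) := by
  obtain ⟨c, hc, hvc⟩ := hv.exists_ne_zero_sub_eq_smul hum hvu
  obtain ⟨d, hd, hyd⟩ := hy.exists_ne_zero_sub_eq_smul hun hyu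
  simp only [EuclideanGeometry.angle, vsub_eq_sub, hvc, hyd,
    InnerProductGeometry.sin_angle_smul_smul hc hd]

theorem stmt_2_general (m n u v x y : EuclideanSpace ℝ (Fin 2)) (r θ : ℝ)
    (hmn : m ≠ n) (hr : dist m n = r)
    -- u, v lie on the ray l¹_m from m; x, y lie on the ray l²_m from m
    (huv : SameRay ℝ (u - m) (v - m))
    -- u, y lie on the ray l¹_n from n; v, x lie on the ray l²_n from n
    (huy : SameRay ℝ (u - n) (y - n))
    -- the two rays at m make an angle at least 28°, similarly at n
    (hm : 28 * π / 180 ≤ EuclideanGeometry.angle u m y)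
    (hn : 28 * π / 180 ≤ EuclideanGeometry.angle u n v)
    (hθ : EuclideanGeometry.angle n u m = θ)
    (hunm : 28 * π / 180 ≤ EuclideanGeometry.angle u n m)
    (humn : 28 * π / 180 ≤ EuclideanGeometry.angle u m n) :
    ENNReal.ofReal (1 / 2 * r ^ 2 * Real.sin (28 * π / 180) ^ 6 / Real.sin θ) ≤
      volume (convexHull ℝ ({u, v, x, y} : Set (EuclideanSpace ℝ (Fin 2)))) := by
  subst hr hθ
  have hαpos : 0 < 28 * π / 180 := by positivity
  have hα : 28 * π / 180 ≤ π / 2 := by linarith [pi_pos]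
  set α := 28 * π / 180
  have hum : u ≠ m := ne_of_angle_pos (hαpos.trans_le hunm) hmn
  have hun : u ≠ n := ne_of_angle_pos (hαpos.trans_le humn) hmn.symm
  have hvu : v ≠ u := ne_of_angle_pos (by rw [angle_comm]; exact hαpos.trans_le hn) hun
  have hyu : y ≠ u := ne_of_angle_pos (by rw [angle_comm]; exact hαpos.trans_le hm) hum
  have hsinθ : 0 < sin (∠ n u m) := by
    have h := sin_mul_dist_le_sin_angle_mul_dist hmn.symm hαpos.le hα hunm humn
    have hS : 0 < sin α := sin_pos_of_pos_of_lt_pi hαpos (by linarith [pi_pos])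
    exact pos_of_mul_pos_left ((mul_pos hS (dist_pos.2 hmn.symm)).trans_le h) dist_nonneg
  have harea := ofReal_dist_mul_dist_mul_sin_angle_div_two_le_volume_convexHull u v y
  rw [sin_angle_eq_of_sameRay huv huy hum hun hvu hyu, angle_comm] at harea
  refine le_trans ?_ (harea.trans (measure_mono (convexHull_mono
    (Set.insert_subset_insert (Set.insert_subset_insert (Set.subset_insert x {y}))))))
  apply ENNReal.ofReal_le_ofReal
  rw [div_le_div_iff₀ hsinθ two_pos]
  calc 1 / 2 * dist m n ^ 2 * sin α ^ 6 * 2 = sin α ^ 4 * dist m n ^ 2 * sin α ^ 2 := by ring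
    _ ≤ sin α ^ 4 * dist m n ^ 2 := mul_le_of_le_one_right (by positivity) (sin_sq_le_one α)
    _ ≤ dist u v * dist u y * sin (∠ n u m) ^ 2 :=
        sin_pow_four_mul_dist_sq_le hmn hαpos.le hα hm hn hunm humn
    _ = dist u v * dist u y * sin (∠ n u m) * sin (∠ n u m) := by ring

/-- Quadrilateral area lower bound: with m, n at distance r, rays from m through u,v and
through x,y, rays from n through u,y and through v,x, angles at m and n between the rays
at least 28°, ∠num = θ, ∠unm ≥ 28°, ∠umn ≥ 28°, the convex quadrilateral uvxy has
area at least (1/2)·r²·sin(28°)⁶/sin θ. -/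
theorem stmt_2 (m n u v x y : EuclideanSpace ℝ (Fin 2)) (r θ : ℝ)
    (hmn : m ≠ n) (hr : dist m n = r)
    -- u, v lie on the ray l¹_m from m; x, y lie on the ray l²_m from m
    (huv : SameRay ℝ (u - m) (v - m))
    (hxy : SameRay ℝ (x - m) (y - m))
    -- u, y lie on the ray l¹_n from n; v, x lie on the ray l²_n from n
    (huy : SameRay ℝ (u - n) (y - n))
    (hvx : SameRay ℝ (v - n) (x - n))
    -- the two rays at m make an angle at least 28°, similarly at n
    (hm : 28 * π / 180 ≤ EuclideanGeometry.angle u m y)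
    (hn : 28 * π / 180 ≤ EuclideanGeometry.angle u n v)
    (hθ : EuclideanGeometry.angle n u m = θ)
    (hunm : 28 * π / 180 ≤ EuclideanGeometry.angle u n m)
    (humn : 28 * π / 180 ≤ EuclideanGeometry.angle u m n) :
    ENNReal.ofReal (1 / 2 * r ^ 2 * Real.sin (28 * π / 180) ^ 6 / Real.sin θ) ≤
      volume (convexHull ℝ ({u, v, x, y} : Set (EuclideanSpace ℝ (Fin 2)))) :=
  stmt_2_general m n u v x y r θ hmn hr huv huy hm hn hθ hunm humn
end

section
/- Let A, B ⊆ ℝ² be measurable, t ∈ (0,1), and z ∈ ℝ². Let H be the homothety of ratio −(1−t)/t centered at z. Suppose R_A ⊆ co(A) and R_B ⊆ co(B) are measurable sets with |R_A ∩ H(R_B)| > |co(A)\A| + |co(H(B))\H(B)|. Then z ∈ tA + (1−t)B. -/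
/-! A point `x ∈ A ∩ H(B)`, say `x = H b`, gives `z = t • x + (1 - t) • b ∈ t • A + (1 - t) • B`.
Such a point exists because otherwise `RA ∩ H(RB) ⊆ (co A \ A) ∪ (co H(B) \ H(B))`, as `H`
maps `co B` onto `co H(B)`; this contradicts the measure hypothesis. -/

open Pointwise MeasureTheory

theorem inter_nonempty_of_measure_diff_add_measure_diff_lt {α : Type*} [MeasurableSpace α]
    {μ : Measure α} {A A' RA C C' RC : Set α} (hRA : RA ⊆ A') (hRC : RC ⊆ C')
    (hlt : μ (A' \ A) + μ (C' \ C) < μ (RA ∩ RC)) : (A ∩ C).Nonempty := by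
  by_contra hempty
  have hcover : RA ∩ RC ⊆ (A' \ A) ∪ (C' \ C) := by
    rintro x ⟨hxA', hxC'⟩
    by_cases hxA : x ∈ A
    · exact Or.inr ⟨hRC hxC', fun hxC => hempty ⟨x, hxA, hxC⟩⟩
    · exact Or.inl ⟨hRA hxA', hxA⟩
  exact hlt.not_ge ((measure_mono hcover).trans (measure_union_le _ _))

section Homothety

variable {𝕜 E : Type*} [Field 𝕜] [AddCommGroup E] [Module 𝕜 E]

theorem AffineMap.coe_homothety_neg (z : E) (c : 𝕜) :
    ⇑(AffineMap.homothety z (-c)) = fun x => z - c • (x - z) := by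
  funext x
  rw [AffineMap.homothety_apply, vsub_eq_sub, vadd_eq_add, neg_smul]
  abel

theorem smul_homothety_add_smul_eq_center {t : 𝕜} (ht : t ≠ 0) (z b : E) :
    t • (z - ((1 - t) / t) • (b - z)) + (1 - t) • b = z := by
  rw [smul_sub, smul_smul, mul_div_cancel₀ _ ht]
  module

end Homothety

theorem stmt_5_general (A B RA RB : Set (EuclideanSpace ℝ (Fin 2)))
    (t : ℝ) (ht : t ∈ Set.Ioo (0 : ℝ) 1) (z : EuclideanSpace ℝ (Fin 2))
    (H : EuclideanSpace ℝ (Fin 2) → EuclideanSpace ℝ (Fin 2))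
    (hH : ∀ x, H x = z - ((1 - t) / t) • (x - z))
    (hRAco : RA ⊆ convexHull ℝ A) (hRBco : RB ⊆ convexHull ℝ B)
    (hbig : volume (convexHull ℝ A \ A) + volume (convexHull ℝ (H '' B) \ (H '' B))
      < volume (RA ∩ H '' RB)) :
    z ∈ t • A + (1 - t) • B := by
  have hH_affine : H = AffineMap.homothety z (-((1 - t) / t)) := by
    rw [AffineMap.coe_homothety_neg]
    exact funext hH
  have hHRB : H '' RB ⊆ convexHull ℝ (H '' B) := by
    rw [hH_affine, ← AffineMap.image_convexHull]
    exact Set.image_mono hRBco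
  obtain ⟨_, hxA, b, hbB, rfl⟩ :=
    inter_nonempty_of_measure_diff_add_measure_diff_lt hRAco hHRB hbig
  rw [← smul_homothety_add_smul_eq_center ht.1.ne' z b, ← hH]
  exact Set.add_mem_add (Set.smul_mem_smul_set hxA) (Set.smul_mem_smul_set hbB)

/-- Averaging argument: if R_A ⊆ co(A), R_B ⊆ co(B) and
|R_A ∩ H(R_B)| > |co(A)\A| + |co(H(B))\H(B)| where H is the homothety of ratio −(1−t)/t
centered at z, then z ∈ tA + (1−t)B. -/
theorem stmt_5 (A B RA RB : Set (EuclideanSpace ℝ (Fin 2)))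
    (hA : MeasurableSet A) (hB : MeasurableSet B)
    (hRA : MeasurableSet RA) (hRB : MeasurableSet RB)
    (t : ℝ) (ht : t ∈ Set.Ioo (0 : ℝ) 1) (z : EuclideanSpace ℝ (Fin 2))
    (H : EuclideanSpace ℝ (Fin 2) → EuclideanSpace ℝ (Fin 2))
    (hH : ∀ x, H x = z - ((1 - t) / t) • (x - z))
    (hRAco : RA ⊆ convexHull ℝ A) (hRBco : RB ⊆ convexHull ℝ B)
    (hbig : volume (convexHull ℝ A \ A) + volume (convexHull ℝ (H '' B) \ (H '' B))
      < volume (RA ∩ H '' RB)) :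
    z ∈ t • A + (1 - t) • B :=
  stmt_5_general A B RA RB t ht z H hH hRAco hRBco hbig
end

section
/- Let C be a convex body in the plane containing the origin o, let p ∈ ∂C be (59°, 1/3)-bisecting, and let l be a supporting line of C at p. Then the angle between l and the segment po lies strictly between 29° and 180° − 29°. -/
open Real EuclideanGeometry

/-- `p` is `(θ, ℓ)`-bisecting in `K` with respect to the origin. -/
def IsBisecting (K : Set (EuclideanSpace ℝ (Fin 2))) (p : EuclideanSpace ℝ (Fin 2))
    (θ ℓ : ℝ) : Prop :=
  ∃ q r : EuclideanSpace ℝ (Fin 2), dist p q = ℓ ∧ dist p r = ℓ ∧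
    EuclideanGeometry.angle q p r = θ ∧
    EuclideanGeometry.angle q p 0 = θ / 2 ∧ EuclideanGeometry.angle r p 0 = θ / 2 ∧
    convexHull ℝ {p, q, r} ⊆ K

/-!
Let `x, y` be the unit vectors from `p` towards the two base vertices of the bisecting triangle
and `m` the unit vector from `p` towards `o`. With `t = 29.5°`, the angle conditions force
`x + y = 2 cos t • m`. Both `x` and `y` lie in the closed half-plane cut off by the supporting
line, and for two unit vectors `a, b` on the same side of a line with unit direction `e` one has
`|⟪e, a + b⟫| ≤ 1 + ⟪a, b⟫`, here `= 2 cos² t`. Hence `|cos ∠(e, m)| ≤ cos t`, i.e. the angle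
lies in `[t, π - t] ⊆ (29°, 151°)`.
-/

open Module Set
open scoped RealInnerProductSpace

lemma abs_add_le_one_add_mul_add_mul {a₁ a₂ b₁ b₂ : ℝ} (ha : a₁ ^ 2 + a₂ ^ 2 = 1)
    (hb : b₁ ^ 2 + b₂ ^ 2 = 1) (ha₂ : a₂ ≤ 0) (hb₂ : b₂ ≤ 0) :
    |a₁ + b₁| ≤ 1 + (a₁ * b₁ + a₂ * b₂) := by
  have hpos : 0 ≤ 1 + (a₁ * b₁ + a₂ * b₂) := by
    nlinarith [sq_nonneg (a₁ + b₁), sq_nonneg (a₂ + b₂)]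
  have hgap : (1 + (a₁ * b₁ + a₂ * b₂)) ^ 2 - (a₁ + b₁) ^ 2 =
      2 * (a₂ * b₂) * (1 + (a₁ * b₁ + a₂ * b₂)) := by
    linear_combination (b₁ ^ 2 - 1) * ha - a₂ ^ 2 * hb
  refine abs_le_of_sq_le_sq ?_ hpos
  nlinarith [mul_nonneg (mul_nonneg_of_nonpos_of_nonpos ha₂ hb₂) hpos]

lemma mem_Icc_of_abs_cos_le {A t : ℝ} (hA : A ∈ Icc 0 π) (ht : t ∈ Icc 0 π)
    (h : |cos A| ≤ cos t) : A ∈ Icc t (π - t) := by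
  have hπt : π - t ∈ Icc 0 π := ⟨by linarith [ht.2], by linarith [ht.1]⟩
  rw [abs_le] at h
  exact ⟨(strictAntiOn_cos.le_iff_ge hA ht).mp h.2,
    (strictAntiOn_cos.le_iff_ge hπt hA).mp (by rw [cos_pi_sub]; linarith [h.1])⟩

section InnerProductSpace

variable {E : Type*} [NormedAddCommGroup E] [InnerProductSpace ℝ E]

lemma inner_eq_of_orthonormal_pair (hE : finrank ℝ E = 2) {e n : E}
    (hen : Orthonormal ℝ ![e, n]) (x y : E) :
    ⟪x, y⟫ = ⟪e, x⟫ * ⟪e, y⟫ + ⟪n, x⟫ * ⟪n, y⟫ := by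
  let b := (basisOfOrthonormalOfCardEqFinrank hen (by simp [hE])).toOrthonormalBasis
    (by simpa using hen)
  rw [← b.sum_inner_mul_inner]
  simp [b, Fin.sum_univ_two, real_inner_comm x]

lemma abs_inner_add_le_one_add_inner (hE : finrank ℝ E = 2) {e n x y : E}
    (hen : Orthonormal ℝ ![e, n]) (hx : ‖x‖ = 1) (hy : ‖y‖ = 1) (hnx : ⟪n, x⟫ ≤ 0)
    (hny : ⟪n, y⟫ ≤ 0) : |⟪e, x + y⟫| ≤ 1 + ⟪x, y⟫ := by
  have parseval := inner_eq_of_orthonormal_pair hE hen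
  rw [inner_add_right, parseval x y]
  refine abs_add_le_one_add_mul_add_mul ?_ ?_ hnx hny
  · have h := real_inner_self_eq_norm_sq x
    rw [parseval, hx] at h
    linear_combination h
  · have h := real_inner_self_eq_norm_sq y
    rw [parseval, hy] at h
    linear_combination h

lemma add_eq_smul_of_inner_eq {x y m : E} {c : ℝ} (hx : ‖x‖ = 1) (hy : ‖y‖ = 1) (hm : ‖m‖ = 1)
    (hxm : ⟪x, m⟫ = c) (hym : ⟪y, m⟫ = c) (hxy : ⟪x, y⟫ = 2 * c ^ 2 - 1) :
    x + y = (2 * c) • m := by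
  rw [← sub_eq_zero, ← norm_eq_zero, ← sq_eq_zero_iff, norm_sub_sq_real, norm_add_sq_real,
    norm_smul, inner_add_left, real_inner_smul_right, real_inner_smul_right, hx, hy, hm, hxm, hym,
    hxy, Real.norm_eq_abs, mul_pow, sq_abs]
  ring

lemma inner_inv_norm_smul_eq_cos_angle (x y : E) :
    ⟪‖x‖⁻¹ • x, ‖y‖⁻¹ • y⟫ = cos (InnerProductGeometry.angle x y) := by
  rw [InnerProductGeometry.cos_angle, real_inner_smul_left, real_inner_smul_right]
  field_simp

lemma inner_inv_norm_smul_nonpos {n z : E} (h : ⟪n, z⟫ ≤ 0) : ⟪‖n‖⁻¹ • n, ‖z‖⁻¹ • z⟫ ≤ 0 := by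
  rw [real_inner_smul_left, real_inner_smul_right]
  exact mul_nonpos_of_nonneg_of_nonpos (by positivity)
    (mul_nonpos_of_nonneg_of_nonpos (by positivity) h)

lemma orthonormal_inv_norm_smul_pair {w n : E} (hw : w ≠ 0) (hn : n ≠ 0) (hwn : ⟪w, n⟫ = 0) :
    Orthonormal ℝ ![‖w‖⁻¹ • w, ‖n‖⁻¹ • n] := by
  have hw₁ : ‖‖w‖⁻¹ • w‖ = 1 := norm_smul_inv_norm hw
  have hn₁ : ‖‖n‖⁻¹ • n‖ = 1 := norm_smul_inv_norm hn
  rw [orthonormal_iff_ite]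
  intro i j
  fin_cases i <;> fin_cases j <;>
    simp [real_inner_smul_left, real_inner_smul_right, hwn, real_inner_comm w n, hw₁, hn₁]

theorem angle_mem_Icc_of_bisector_of_inner_nonpos (hE : finrank ℝ E = 2) {w n x y m : E}
    {t : ℝ} (hw : w ≠ 0) (hn : n ≠ 0) (hwn : ⟪w, n⟫ = 0) (hnx : ⟪n, x⟫ ≤ 0) (hny : ⟪n, y⟫ ≤ 0)
    (hxm : InnerProductGeometry.angle x m = t) (hym : InnerProductGeometry.angle y m = t)
    (hxy : InnerProductGeometry.angle x y = 2 * t) (ht : t < π / 2) :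
    InnerProductGeometry.angle w m ∈ Icc t (π - t) := by
  have ht₀ : 0 ≤ t := hxm ▸ InnerProductGeometry.angle_nonneg x m
  have hne : x ≠ 0 ∧ y ≠ 0 ∧ m ≠ 0 := by
    refine ⟨?_, ?_, ?_⟩ <;> rintro rfl
    · simp at hxm; linarith
    · simp at hym; linarith
    · simp at hxm; linarith
  obtain ⟨hx, hy, hm⟩ := hne
  have hunit {z : E} (hz : z ≠ 0) : ‖‖z‖⁻¹ • z‖ = 1 := norm_smul_inv_norm hz
  have hbis : ‖x‖⁻¹ • x + ‖y‖⁻¹ • y = (2 * cos t) • (‖m‖⁻¹ • m) := by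
    refine add_eq_smul_of_inner_eq (hunit hx) (hunit hy) (hunit hm) ?_ ?_ ?_
    · rw [inner_inv_norm_smul_eq_cos_angle, hxm]
    · rw [inner_inv_norm_smul_eq_cos_angle, hym]
    · rw [inner_inv_norm_smul_eq_cos_angle, hxy, cos_two_mul]
  have hle := abs_inner_add_le_one_add_inner hE (orthonormal_inv_norm_smul_pair hw hn hwn)
    (hunit hx) (hunit hy) (inner_inv_norm_smul_nonpos hnx) (inner_inv_norm_smul_nonpos hny)
  have hcos : 0 < cos t := cos_pos_of_mem_Ioo ⟨by linarith, ht⟩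
  rw [hbis, real_inner_smul_right, inner_inv_norm_smul_eq_cos_angle,
    inner_inv_norm_smul_eq_cos_angle, hxy, cos_two_mul, abs_mul, abs_of_pos (by positivity)]
    at hle
  refine mem_Icc_of_abs_cos_le
    ⟨InnerProductGeometry.angle_nonneg w m, InnerProductGeometry.angle_le_pi w m⟩
    ⟨ht₀, by linarith⟩ ?_
  nlinarith

end InnerProductSpace

theorem stmt_8_general (C : Set (EuclideanSpace ℝ (Fin 2)))
    (p : EuclideanSpace ℝ (Fin 2))
    (hbis : IsBisecting C p (59 * π / 180) (1 / 3))
    (f : EuclideanSpace ℝ (Fin 2) →L[ℝ] ℝ) (hf : f ≠ 0)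
    (hsupp : ∀ x ∈ C, f x ≤ f p)
    (w : EuclideanSpace ℝ (Fin 2)) (hw : w ≠ 0) (hwl : f w = 0) :
    InnerProductGeometry.angle w ((0 : EuclideanSpace ℝ (Fin 2)) - p) ∈
      Set.Ioo (29 * π / 180) (π - 29 * π / 180) := by
  obtain ⟨q, r, -, -, hqr, hq0, hr0, hconv⟩ := hbis
  set n := (InnerProductSpace.toDual ℝ _).symm f
  have hn : ∀ z, ⟪n, z⟫ = f z := fun z => InnerProductSpace.toDual_symm_apply
  have hn0 : n ≠ 0 := by
    intro h
    exact hf (ContinuousLinearMap.ext fun z => by simp [← hn, h])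
  have hside {z} (hz : z ∈ ({p, q, r} : Set _)) : ⟪n, z - p⟫ ≤ 0 := by
    rw [hn, map_sub, sub_nonpos]
    exact hsupp z (hconv (subset_convexHull ℝ _ hz))
  have hangles := angle_mem_Icc_of_bisector_of_inner_nonpos (x := q - p) (y := r - p)
    (m := 0 - p) (t := 59 * π / 180 / 2) finrank_euclideanSpace_fin hw hn0
    (by rw [real_inner_comm, hn, hwl]) (hside (by simp)) (hside (by simp)) hq0 hr0
    (hqr.trans (by ring)) (by linarith [pi_pos])
  refine Icc_subset_Ioo ?_ ?_ hangles <;> linarith [pi_pos]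

/-- If p ∈ ∂C is (59°, 1/3)-bisecting in a convex body C with the origin in its interior, then
any supporting line l of C at p makes an angle with the segment po strictly between
29° and 180° − 29°. The supporting line is {x | f x = f p} for a nonzero functional f with
C ⊆ {f ≤ f p}; w is any nonzero direction vector of l. -/
theorem stmt_8 (C : Set (EuclideanSpace ℝ (Fin 2))) (hC : Convex ℝ C)
    (h0 : (0 : EuclideanSpace ℝ (Fin 2)) ∈ interior C)
    (p : EuclideanSpace ℝ (Fin 2)) (hp : p ∈ frontier C)
    (hbis : IsBisecting C p (59 * π / 180) (1 / 3))
    (f : EuclideanSpace ℝ (Fin 2) →L[ℝ] ℝ) (hf : f ≠ 0)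
    (hsupp : ∀ x ∈ C, f x ≤ f p)
    (w : EuclideanSpace ℝ (Fin 2)) (hw : w ≠ 0) (hwl : f w = 0) :
    InnerProductGeometry.angle w ((0 : EuclideanSpace ℝ (Fin 2)) - p) ∈
      Set.Ioo (29 * π / 180) (π - 29 * π / 180) :=
  stmt_8_general C p hbis f hf hsupp w hw hwl
end

section
/- For measurable sets A, B ⊆ ℝⁿ of positive measure, the measures of asymmetry satisfy α(A,B) ≤ 2ω(A,B), where α is the Fraenkel asymmetry index and ω is the Figalli–Jerison measure. -/
open Pointwise Real MeasureTheory

/-- α(A,B) ≤ 2·ω(A,B): for any admissible pair of homothetic convex supersets K_A ⊇ A,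
K_B ⊇ B, the Fraenkel asymmetry (an infimum over translations x, with the scaling s chosen
so that |A| = |s·co(B)|) is at most twice the maximum of the normalized deficits. -/
theorem stmt_9 (n : ℕ) (A B : Set (EuclideanSpace ℝ (Fin n)))
    (hA : MeasurableSet A) (hB : MeasurableSet B)
    (hA0 : 0 < volume A) (hAfin : volume A < ⊤)
    (hB0 : 0 < volume B) (hBfin : volume B < ⊤)
    (s : ℝ) (hs : 0 < s) (hvol : volume A = volume (s • convexHull ℝ B))
    (KA KB : Set (EuclideanSpace ℝ (Fin n))) (hKA : Convex ℝ KA) (hKB : Convex ℝ KB)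
    (hAK : A ⊆ KA) (hBK : B ⊆ KB)
    (hhom : ∃ c : ℝ, 0 < c ∧ ∃ w, KB = (fun x => c • x + w) '' KA) :
    (⨅ x : EuclideanSpace ℝ (Fin n),
        volume (symmDiff A (x +ᵥ s • convexHull ℝ B)) / volume A) ≤
      2 * max (volume (KA \ A) / volume A) (volume (KB \ B) / volume B) := by
  obtain ⟨c, hc, w, hKBeq⟩ := hhom
  set K := convexHull ℝ B with hKdef
  have hBsubK : B ⊆ K := subset_convexHull ℝ B
  have hKsubKB : K ⊆ KB := convexHull_min hBK hKB
  obtain ⟨p, hp⟩ : A.Nonempty := nonempty_of_measure_ne_zero hA0.ne'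
  have hpKA : p ∈ KA := hAK hp
  -- generic facts about T = x +ᵥ s • K
  have hTconv : ∀ x : EuclideanSpace ℝ (Fin n), Convex ℝ (x +ᵥ s • K) := fun x =>
    ((convex_convexHull ℝ B).smul s).vadd x
  have hTvol : ∀ x : EuclideanSpace ℝ (Fin n), volume (x +ᵥ s • K) = volume A := fun x => by
    rw [measure_vadd, hvol]
  have hdiff_eq : ∀ x : EuclideanSpace ℝ (Fin n),
      volume (A \ (x +ᵥ s • K)) = volume ((x +ᵥ s • K) \ A) := by
    intro x
    set T := x +ᵥ s • K with hT
    have hTnull : NullMeasurableSet T (volume) := Convex.nullMeasurableSet volume (hTconv x)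
    have hcapfin : volume (A ∩ T) ≠ ⊤ :=
      (lt_of_le_of_lt (measure_mono Set.inter_subset_left) hAfin).ne
    have hcapfin' : volume (T ∩ A) ≠ ⊤ := by rwa [Set.inter_comm]
    have h1 : volume (A \ T) = volume A - volume (A ∩ T) := by
      rw [← Set.diff_self_inter]
      exact measure_diff Set.inter_subset_left (hA.nullMeasurableSet.inter hTnull) hcapfin
    have h2 : volume (T \ A) = volume T - volume (T ∩ A) := by
      rw [← Set.diff_self_inter]
      exact measure_diff Set.inter_subset_left (hTnull.inter hA.nullMeasurableSet) hcapfin'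
    rw [h1, h2, hTvol x, Set.inter_comm]
  have hsymm : ∀ x : EuclideanSpace ℝ (Fin n),
      volume (symmDiff A (x +ᵥ s • K)) ≤ 2 * volume (A \ (x +ᵥ s • K)) := by
    intro x
    rw [Set.symmDiff_def]
    calc volume (A \ (x +ᵥ s • K) ∪ (x +ᵥ s • K) \ A)
        ≤ volume (A \ (x +ᵥ s • K)) + volume ((x +ᵥ s • K) \ A) := measure_union_le _ _
      _ = 2 * volume (A \ (x +ᵥ s • K)) := by rw [← hdiff_eq x, two_mul]
  have hsymm' : ∀ x : EuclideanSpace ℝ (Fin n),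
      volume (symmDiff A (x +ᵥ s • K)) ≤ 2 * volume ((x +ᵥ s • K) \ A) := fun x => by
    rw [← hdiff_eq x]; exact hsymm x
  rcases le_or_gt (s * c) 1 with hsc | hsc
  · -- T fits inside KA
    set x : EuclideanSpace ℝ (Fin n) := (1 - s * c) • p - s • w with hx
    have hTsub : (x +ᵥ s • K) ⊆ KA := by
      rintro y hy
      obtain ⟨z, hz, rfl⟩ := hy
      obtain ⟨k, hk, rfl⟩ := hz
      obtain ⟨a, ha, rfl⟩ := hKBeq ▸ hKsubKB hk
      have heq : x + s • (c • a + w) = (s * c) • a + (1 - s * c) • p := by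
        simp only [hx]
        module
      show x + s • (c • a + w) ∈ KA
      rw [heq]
      exact hKA ha hpKA (by positivity) (by linarith) (by ring)
    have hbound : volume ((x +ᵥ s • K) \ A) ≤ volume (KA \ A) :=
      measure_mono (Set.diff_subset_diff_left hTsub)
    refine le_trans (iInf_le _ x) ?_
    calc volume (symmDiff A (x +ᵥ s • K)) / volume A
        ≤ (2 * volume (KA \ A)) / volume A :=
          ENNReal.div_le_div_right (le_trans (hsymm' x) (mul_le_mul_right hbound 2)) _
      _ = 2 * (volume (KA \ A) / volume A) := by
          rw [mul_div_assoc]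
      _ ≤ 2 * max (volume (KA \ A) / volume A) (volume (KB \ B) / volume B) := by
          gcongr; exact le_max_left _ _
  · -- A fits inside x +ᵥ s • KB
    set x : EuclideanSpace ℝ (Fin n) := -(s • w) - (s * c - 1) • p with hx
    have hscne : s * c ≠ 0 := by positivity
    have hAsub : A ⊆ x +ᵥ s • KB := by
      intro a ha
      set a' : EuclideanSpace ℝ (Fin n) := (s * c)⁻¹ • (a + (s * c - 1) • p) with ha'
      have ha'KA : a' ∈ KA := by
        have hkey : (s * c)⁻¹ * (s * c - 1) = 1 - (s * c)⁻¹ := by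
          field_simp
        have : a' = (s * c)⁻¹ • a + (1 - (s * c)⁻¹) • p := by
          rw [ha', smul_add, smul_smul, hkey]
        rw [this]
        refine hKA (hAK ha) hpKA (by positivity) ?_ (by ring)
        have : (s * c)⁻¹ ≤ 1 := by
          rw [inv_le_one_iff₀]; right; exact hsc.le
        linarith
      have hmem : c • a' + w ∈ KB := by
        rw [hKBeq]; exact ⟨a', ha'KA, rfl⟩
      have hsca' : (s * c) • a' = a + (s * c - 1) • p := by
        rw [ha', smul_smul, mul_inv_cancel₀ hscne, one_smul]
      have heq : x + s • (c • a' + w) = a := by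
        have h1 : s • (c • a' + w) = (s * c) • a' + s • w := by module
        rw [h1, hsca', hx]; module
      exact ⟨s • (c • a' + w), Set.smul_mem_smul_set hmem, heq⟩
    have hdiffsub : A \ (x +ᵥ s • K) ⊆ x +ᵥ s • (KB \ K) := by
      rintro y ⟨hyA, hyT⟩
      obtain ⟨z, hz, rfl⟩ := hAsub hyA
      obtain ⟨k, hk, rfl⟩ := hz
      have hkK : k ∉ K := by
        intro hkK
        exact hyT ⟨s • k, ⟨k, hkK, rfl⟩, rfl⟩
      exact ⟨s • k, ⟨k, ⟨hk, hkK⟩, rfl⟩, rfl⟩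
    set S := ENNReal.ofReal (s ^ Module.finrank ℝ (EuclideanSpace ℝ (Fin n))) with hS
    have hvolK : volume A = S * volume K := by
      rw [hvol, Measure.addHaar_smul_of_nonneg volume hs.le]
    have hSB : S * volume B ≤ volume A := by
      rw [hvolK]
      exact mul_le_mul_right (measure_mono hBsubK) S
    have hDbound : volume (A \ (x +ᵥ s • K)) ≤ S * volume (KB \ B) := by
      calc volume (A \ (x +ᵥ s • K)) ≤ volume (x +ᵥ s • (KB \ K)) := measure_mono hdiffsub
        _ = S * volume (KB \ K) := by
            rw [measure_vadd, Measure.addHaar_smul_of_nonneg volume hs.le]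
        _ ≤ S * volume (KB \ B) := by
            exact mul_le_mul_right (measure_mono (Set.diff_subset_diff_right hBsubK)) S
    have hkey : S * volume (KB \ B) / volume A ≤ volume (KB \ B) / volume B := by
      rw [ENNReal.div_le_iff_le_mul (Or.inl hA0.ne') (Or.inl hAfin.ne)]
      have hSle : S ≤ volume A / volume B :=
        (ENNReal.le_div_iff_mul_le (Or.inl hB0.ne') (Or.inl hBfin.ne)).2 hSB
      calc S * volume (KB \ B) = volume (KB \ B) * S := mul_comm _ _
        _ ≤ volume (KB \ B) * (volume A / volume B) := mul_le_mul_right hSle _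
        _ = volume (KB \ B) / volume B * volume A := by
            rw [div_eq_mul_inv, div_eq_mul_inv]; ring
    refine le_trans (iInf_le _ x) ?_
    calc volume (symmDiff A (x +ᵥ s • K)) / volume A
        ≤ 2 * (S * volume (KB \ B)) / volume A := by
          refine ENNReal.div_le_div_right (le_trans (hsymm x) ?_) _
          exact mul_le_mul_right hDbound 2
      _ = 2 * (S * volume (KB \ B) / volume A) := by rw [mul_div_assoc]
      _ ≤ 2 * (volume (KB \ B) / volume B) := mul_le_mul_right hkey 2
      _ ≤ 2 * max (volume (KA \ A) / volume A) (volume (KB \ B) / volume B) :=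
          mul_le_mul_right (le_max_right _ _) 2
end

section
/- Let o, p, q, i, p', q' be points in the plane with i in the interior of triangle opq, p' on segment op, q' on segment oq, p' on ray qi beyond i, q' on ray pi beyond i, and suppose |op'| ≥ (1/10)|op| and |oq'| ≥ (1/10)|oq|. If the triangle oiq has area at most the area of triangle oip, then area(piq) ≤ 10·area(pip'). -/
/-! Write `p' = o + s (p - o)` and `i = q + α (p' - q)`. Measured in units of area(opq), the
triangles oiq, oip, piq, pip' have areas `α s`, `1 - α`, `α (1 - s)` and `(1 - s)(1 - α)`.
The bound `|op'| ≥ |op| / 10` says `s ≥ 1/10`, hence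
`α (1 - s) ≤ 10 (1 - s) · α s ≤ 10 (1 - s)(1 - α)`, the middle step being the hypothesis
area(oiq) ≤ area(oip). -/

open Real MeasureTheory

open AffineMap ENNReal Pointwise

noncomputable def det2 (u v : EuclideanSpace ℝ (Fin 2)) : ℝ := u 0 * v 1 - u 1 * v 0

/-- The triangle `abc` is the image of a fixed triangle under the affine map sending its
vertices to `a, b, c`, whose linear part has determinant `det2 (b - a) (c - a)`. -/
lemma exists_volume_convexHull_triple_eq :
    ∃ c₀ : ℝ≥0∞, ∀ a b c : EuclideanSpace ℝ (Fin 2),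
      volume (convexHull ℝ ({a, b, c} : Set (EuclideanSpace ℝ (Fin 2)))) =
        ENNReal.ofReal |det2 (b - a) (c - a)| * c₀ := by
  set e := PiLp.basisFun 2 ℝ (Fin 2) with he
  refine ⟨volume (convexHull ℝ {0, e 0, e 1}), fun a b c => ?_⟩
  set f : EuclideanSpace ℝ (Fin 2) →ₗ[ℝ] EuclideanSpace ℝ (Fin 2) := e.constr ℝ ![b - a, c - a]
  have hf₀ : f (e 0) = b - a := by simp [f]
  have hf₁ : f (e 1) = c - a := by simp [f]
  have himage : ({a, b, c} : Set (EuclideanSpace ℝ (Fin 2))) = a +ᵥ f '' {0, e 0, e 1} := by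
    rw [Set.image_insert_eq, Set.image_insert_eq, Set.image_singleton, hf₀, hf₁, map_zero]
    simp [Set.vadd_set_insert, Set.vadd_set_singleton]
  have hdet : LinearMap.det f = det2 (b - a) (c - a) := by
    rw [← LinearMap.det_toMatrix e, Matrix.det_fin_two, det2]
    simp only [LinearMap.toMatrix_apply, he, PiLp.basisFun_repr]
    rw [← he, hf₀, hf₁]
    simp only [PiLp.sub_apply]
    ring
  rw [himage, convexHull_vadd, measure_vadd, ← f.image_convexHull,
    Measure.addHaar_image_linearMap, hdet]

lemma volume_convexHull_triple_eq_mul {a b c a' b' c' : EuclideanSpace ℝ (Fin 2)} {t : ℝ}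
    (h : det2 (b - a) (c - a) = t * det2 (b' - a') (c' - a')) :
    volume (convexHull ℝ ({a, b, c} : Set (EuclideanSpace ℝ (Fin 2)))) =
      ENNReal.ofReal |t| *
        volume (convexHull ℝ ({a', b', c'} : Set (EuclideanSpace ℝ (Fin 2)))) := by
  obtain ⟨c₀, hc₀⟩ := exists_volume_convexHull_triple_eq
  rw [hc₀, hc₀, h, abs_mul, ENNReal.ofReal_mul (abs_nonneg t), mul_assoc]

section Cevian

local notation "area" a:max b:max c:max =>
  volume (convexHull ℝ ({a, b, c} : Set (EuclideanSpace ℝ (Fin 2))))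

lemma volume_triangles_of_cevian (o p q : EuclideanSpace ℝ (Fin 2)) {s α : ℝ}
    (hs₀ : 0 ≤ s) (hs₁ : s ≤ 1) (hα₀ : 0 ≤ α) (hα₁ : α ≤ 1) :
    let p' := lineMap o p s
    let i := lineMap q p' α
    area o i q = ENNReal.ofReal (α * s) * area o p q ∧
      area o i p = ENNReal.ofReal (1 - α) * area o p q ∧
      area p i q = ENNReal.ofReal (α * (1 - s)) * area o p q ∧
      area p i p' = ENNReal.ofReal ((1 - s) * (1 - α)) * area o p q := by
  intro p' i
  have hp' : ∀ k, p' k = (1 - s) * o k + s * p k := by simp [p', lineMap_apply_module]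
  have hi : ∀ k, i k = (1 - α) * q k + α * p' k := by simp [i, lineMap_apply_module]
  refine ⟨?_, ?_, ?_, ?_⟩
  · rw [volume_convexHull_triple_eq_mul (t := α * s), abs_of_nonneg (by positivity)]
    simp only [det2, PiLp.sub_apply, hi, hp']; ring
  · rw [volume_convexHull_triple_eq_mul (t := -(1 - α)), abs_neg,
      abs_of_nonneg (by linarith)]
    simp only [det2, PiLp.sub_apply, hi, hp']; ring
  · rw [volume_convexHull_triple_eq_mul (t := -(α * (1 - s))), abs_neg,
      abs_of_nonneg (mul_nonneg hα₀ (by linarith))]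
    simp only [det2, PiLp.sub_apply, hi, hp']; ring
  · rw [volume_convexHull_triple_eq_mul (t := (1 - s) * (1 - α)),
      abs_of_nonneg (mul_nonneg (by linarith) (by linarith))]
    simp only [det2, PiLp.sub_apply, hi, hp']; ring

end Cevian

theorem stmt_12_general (o p q i p' : EuclideanSpace ℝ (Fin 2))
    (hp' : p' ∈ segment ℝ o p)
    (hp'ray : i ∈ segment ℝ q p')
    (hop' : (1 / 10) * dist o p ≤ dist o p')
    (harea : volume (convexHull ℝ ({o, i, q} : Set (EuclideanSpace ℝ (Fin 2)))) ≤
      volume (convexHull ℝ ({o, i, p} : Set (EuclideanSpace ℝ (Fin 2))))) :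
    volume (convexHull ℝ ({p, i, q} : Set (EuclideanSpace ℝ (Fin 2)))) ≤
      10 * volume (convexHull ℝ ({p, i, p'} : Set (EuclideanSpace ℝ (Fin 2)))) := by
  rw [segment_eq_image_lineMap] at hp' hp'ray
  obtain ⟨s, ⟨hs₀, hs₁⟩, rfl⟩ := hp'
  obtain ⟨α, ⟨hα₀, hα₁⟩, rfl⟩ := hp'ray
  obtain ⟨hoiq, hoip, hpiq, hpip'⟩ := volume_triangles_of_cevian o p q hs₀ hs₁ hα₀ hα₁
  rw [hoiq, hoip] at harea
  rw [hpiq, hpip']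
  set X := volume (convexHull ℝ ({o, p, q} : Set (EuclideanSpace ℝ (Fin 2))))
  rcases eq_or_ne o p with rfl | hop
  · have hX : X = 0 :=
      (volume_convexHull_triple_eq_mul (t := 0) (a' := o) (b' := o) (c' := q)
        (by simp [det2])).trans (by simp)
    simp [hX]
  have hs : 1 / 10 ≤ s := by
    rw [dist_left_lineMap, Real.norm_eq_abs, abs_of_nonneg hs₀] at hop'
    exact le_of_mul_le_mul_right hop' (dist_pos.2 hop)
  calc ENNReal.ofReal (α * (1 - s)) * X
      ≤ ENNReal.ofReal (10 * (1 - s)) * (ENNReal.ofReal (α * s) * X) := by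
        rw [← mul_assoc, ← ENNReal.ofReal_mul (by linarith)]
        gcongr ?_ * X
        refine ENNReal.ofReal_le_ofReal ?_
        nlinarith [mul_nonneg hα₀ (sub_nonneg.2 hs₁)]
    _ ≤ ENNReal.ofReal (10 * (1 - s)) * (ENNReal.ofReal (1 - α) * X) := by gcongr
    _ = 10 * (ENNReal.ofReal ((1 - s) * (1 - α)) * X) := by
        rw [← mul_assoc, ← ENNReal.ofReal_mul (by linarith), mul_assoc,
          ENNReal.ofReal_mul (by norm_num), ENNReal.ofReal_ofNat, mul_assoc]

/-- Triangle area comparison: with i interior to triangle opq, p' on segment op beyond which the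
ray qi passes (i ∈ [q,p']), q' on segment oq with i ∈ [p,q'], |op'| ≥ |op|/10, |oq'| ≥ |oq|/10,
and area(oiq) ≤ area(oip), we get area(piq) ≤ 10·area(pip'). -/
theorem stmt_12 (o p q i p' q' : EuclideanSpace ℝ (Fin 2))
    (hi : i ∈ interior (convexHull ℝ ({o, p, q} : Set (EuclideanSpace ℝ (Fin 2)))))
    (hp' : p' ∈ segment ℝ o p) (hq' : q' ∈ segment ℝ o q)
    (hp'ray : i ∈ segment ℝ q p') (hq'ray : i ∈ segment ℝ p q')
    (hop' : (1 / 10) * dist o p ≤ dist o p') (hoq' : (1 / 10) * dist o q ≤ dist o q')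
    (harea : volume (convexHull ℝ ({o, i, q} : Set (EuclideanSpace ℝ (Fin 2)))) ≤
      volume (convexHull ℝ ({o, i, p} : Set (EuclideanSpace ℝ (Fin 2))))) :
    volume (convexHull ℝ ({p, i, q} : Set (EuclideanSpace ℝ (Fin 2)))) ≤
      10 * volume (convexHull ℝ ({p, i, p'} : Set (EuclideanSpace ℝ (Fin 2)))) :=
  stmt_12_general o p q i p' hp' hp'ray hop' harea
end

section
/- Let T be a unit equilateral triangle centered at the origin o, K convex with T ⊆ K ⊆ −2T, and 0 < η ≤ 10⁻⁹. Then for every k ∈ K with k = λk' for some k' ∈ ∂K and λ ≥ 1/5, the closed ball B((1−η)k, η/100) is contained in (1−η/2)⁻¹(1−η)·K, provided every point of ∂K is (60°, 1/2)-bisecting. -/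
open Pointwise Real EuclideanGeometry

/-!
The ball of radius `√3 / 6` about `o` is the inscribed ball of `T ⊆ K`, so every boundary point
`k'` has `‖k'‖ ≥ √3 / 6`, and `λ • k' ∈ K` forces `λ ≤ 1`. The bisecting triangle at `k'` is
equilateral of side `1 / 2` with its axis through `o`; combining its apex with its inscribed ball
puts the ball of radius `η ‖k'‖ / 4` about `(1 - η / 2) k'` inside `K`. Convexity combines this
ball with the one about `o`, with weights `λ` and `1 - λ`, into a ball of radius at least `η / 50`
about `(1 - η / 2) k`, and scaling by `(1 - η) / (1 - η / 2) ≥ 1 / 2` gives the claim.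
-/

open Metric hiding smul_closedBall
open Module
open scoped RealInnerProductSpace

theorem exists_smul_add_smul_eq_of_finrank_eq_two {𝕜 W : Type*} [Field 𝕜] [AddCommGroup W]
    [Module 𝕜 W] (hW : finrank 𝕜 W = 2) {u v : W} (h : LinearIndependent 𝕜 ![u, v]) (x : W) :
    ∃ a b : 𝕜, a • u + b • v = x := by
  have hspan := h.span_eq_top_of_card_eq_finrank (by simp [hW])
  rw [Matrix.range_cons, Matrix.range_cons, Matrix.range_empty, Set.union_empty,
    Set.singleton_union] at hspan
  exact Submodule.mem_span_pair.mp (hspan ▸ Submodule.mem_top)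

theorem smul_add_smul_add_smul_mem_convexHull {E : Type*} [AddCommGroup E] [Module ℝ E]
    (p q r : E) {a b c : ℝ} (ha : 0 ≤ a) (hb : 0 ≤ b) (hc : 0 ≤ c) (habc : a + b + c = 1) :
    a • p + b • q + c • r ∈ convexHull ℝ {p, q, r} := by
  have h := (convex_convexHull ℝ ({p, q, r} : Set E)).sum_mem (t := Finset.univ)
    (w := ![a, b, c]) (z := ![p, q, r]) ?_ ?_ ?_
  · simpa [Fin.sum_univ_three, add_assoc] using h
  · intro i _; fin_cases i <;> simpa
  · simp [Fin.sum_univ_three, habc]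
  · intro i _; fin_cases i <;> exact subset_convexHull ℝ _ (by simp)

section Normed

variable {E : Type*} [NormedAddCommGroup E] [NormedSpace ℝ E]

theorem Convex.closedBall_combo_subset [ProperSpace E] {K : Set E} (hK : Convex ℝ K)
    {c₁ c₂ : E} {r₁ r₂ t : ℝ} (hr₁ : 0 ≤ r₁) (hr₂ : 0 ≤ r₂)
    (h₁ : closedBall c₁ r₁ ⊆ K) (h₂ : closedBall c₂ r₂ ⊆ K) (ht₀ : 0 ≤ t) (ht₁ : t ≤ 1) :
    closedBall (t • c₁ + (1 - t) • c₂) (t * r₁ + (1 - t) * r₂) ⊆ K :=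
  calc closedBall (t • c₁ + (1 - t) • c₂) (t * r₁ + (1 - t) * r₂)
      = t • closedBall c₁ r₁ + (1 - t) • closedBall c₂ r₂ := by
        rw [smul_closedBall _ _ hr₁, smul_closedBall _ _ hr₂, Real.norm_of_nonneg ht₀,
          Real.norm_of_nonneg (sub_nonneg.2 ht₁),
          closedBall_add_closedBall (by positivity) (mul_nonneg (sub_nonneg.2 ht₁) hr₂)]
    _ ⊆ t • K + (1 - t) • K := Set.add_subset_add (Set.smul_set_mono h₁) (Set.smul_set_mono h₂)
    _ ⊆ K := hK.set_combo_subset ht₀ (sub_nonneg.2 ht₁) (by ring)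

theorem le_dist_of_closedBall_subset_of_mem_frontier {K : Set E} {x y : E} {ρ : ℝ}
    (hball : closedBall x ρ ⊆ K) (hy : y ∈ frontier K) : ρ ≤ dist y x := by
  by_contra! h
  exact hy.2 (interior_mono hball (by rw [interior_closedBall _ (by grind [dist_nonneg])]; exact h))

theorem Convex.le_one_of_smul_mem_of_mem_frontier {K : Set E} (hK : Convex ℝ K)
    (h₀ : 0 ∈ interior K) {p : E} (hp : p ∈ frontier K) {t : ℝ} (ht : t • p ∈ K) : t ≤ 1 := by
  by_contra! h
  refine hp.2 ?_
  have hcombo := hK.combo_interior_closure_mem_interior h₀ (subset_closure ht)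
    (a := 1 - t⁻¹) (b := t⁻¹) (sub_pos.2 (inv_lt_one_of_one_lt₀ h)) (by positivity) (by ring)
  rwa [smul_zero, zero_add, smul_smul, inv_mul_cancel₀ (by positivity), one_smul] at hcombo

theorem closedBall_subset_smul_of_closedBall_subset {K : Set E} {k : E} {η : ℝ} (hη₀ : 0 ≤ η)
    (hη₁ : η ≤ 2 / 3) (h : closedBall ((1 - η / 2) • k) (η / 50) ⊆ K) :
    closedBall ((1 - η) • k) (η / 100) ⊆ ((1 - η) / (1 - η / 2)) • K := by
  have hc : 1 / 2 ≤ (1 - η) / (1 - η / 2) := by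
    rw [le_div_iff₀ (by linarith)]; linarith
  calc closedBall ((1 - η) • k) (η / 100)
      ⊆ closedBall ((1 - η) • k) ((1 - η) / (1 - η / 2) * (η / 50)) :=
        closedBall_subset_closedBall (by nlinarith)
    _ = ((1 - η) / (1 - η / 2)) • closedBall ((1 - η / 2) • k) (η / 50) := by
        rw [smul_closedBall _ _ (by positivity), smul_smul, Real.norm_of_nonneg (by linarith),
          div_mul_cancel₀ _ (by linarith)]
    _ ⊆ ((1 - η) / (1 - η / 2)) • K := Set.smul_set_mono h

end Normed

section InnerProduct

variable {V : Type*} [NormedAddCommGroup V] [InnerProductSpace ℝ V]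

theorem linearIndependent_pair_of_inner {u v : V} (h : ⟪u, v⟫ ^ 2 ≠ ‖u‖ ^ 2 * ‖v‖ ^ 2) :
    LinearIndependent ℝ ![u, v] := by
  refine Matrix.linearIndependent_of_det_gram_ne_zero (𝕜 := ℝ) ?_
  simpa [Matrix.det_fin_two, Matrix.gram, real_inner_comm, sub_eq_zero, ← sq] using h.symm

theorem norm_sq_and_inner_of_equilateral {w₁ w₂ w₃ : V} {s : ℝ} (h₁₂ : ‖w₁ - w₂‖ = s)
    (h₂₃ : ‖w₂ - w₃‖ = s) (h₃₁ : ‖w₃ - w₁‖ = s) (hsum : w₁ + w₂ + w₃ = 0) :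
    ‖w₁‖ ^ 2 = s ^ 2 / 3 ∧ ⟪w₁, w₂⟫ = -(s ^ 2 / 6) := by
  obtain rfl : w₃ = -(w₁ + w₂) := eq_neg_of_add_eq_zero_right hsum
  replace h₁₂ := congrArg (· ^ 2) h₁₂
  replace h₂₃ := congrArg (· ^ 2) h₂₃
  replace h₃₁ := congrArg (· ^ 2) h₃₁
  simp only [← real_inner_self_eq_norm_sq, inner_sub_left, inner_sub_right, inner_add_left,
    inner_add_right, inner_neg_left, inner_neg_right, real_inner_comm w₁ w₂] at *
  constructor <;> linarith

theorem convexHull_subset_closedBall_of_equilateral {v₁ v₂ v₃ : V} {s : ℝ}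
    (h₁₂ : dist v₁ v₂ = s) (h₂₃ : dist v₂ v₃ = s) (h₃₁ : dist v₃ v₁ = s)
    (hsum : v₁ + v₂ + v₃ = 0) : convexHull ℝ {v₁, v₂, v₃} ⊆ closedBall 0 s := by
  have hvertex : ∀ {w₁ w₂ w₃ : V}, ‖w₁ - w₂‖ = s → ‖w₂ - w₃‖ = s → ‖w₃ - w₁‖ = s →
      w₁ + w₂ + w₃ = 0 → w₁ ∈ closedBall 0 s := by
    intro w₁ w₂ w₃ h₁₂ h₂₃ h₃₁ hsum
    have hs : 0 ≤ s := h₁₂ ▸ norm_nonneg _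
    have := (norm_sq_and_inner_of_equilateral h₁₂ h₂₃ h₃₁ hsum).1
    rw [mem_closedBall_zero_iff]
    nlinarith [norm_nonneg w₁]
  simp only [dist_eq_norm] at h₁₂ h₂₃ h₃₁
  refine (convex_closedBall 0 s).convexHull_subset_iff.2 ?_
  rintro _ (rfl | rfl | rfl)
  exacts [hvertex h₁₂ h₂₃ h₃₁ hsum, hvertex h₂₃ h₃₁ h₁₂ (by rw [← hsum]; abel),
    hvertex h₃₁ h₁₂ h₂₃ (by rw [← hsum]; abel)]

theorem closedBall_subset_convexHull_of_equilateral (hV : finrank ℝ V = 2) {p q r : V} {s : ℝ}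
    (hpq : dist p q = s) (hqr : dist q r = s) (hrp : dist r p = s) :
    closedBall ((1 / 3 : ℝ) • (p + q + r)) (s * √3 / 6) ⊆ convexHull ℝ {p, q, r} := by
  set c := (1 / 3 : ℝ) • (p + q + r)
  have hsum : (p - c) + (q - c) + (r - c) = 0 := by simp only [c]; module
  simp only [dist_eq_norm] at hpq hqr hrp
  have hpq' : ‖(p - c) - (q - c)‖ = s := by rwa [sub_sub_sub_cancel_right]
  have hqr' : ‖(q - c) - (r - c)‖ = s := by rwa [sub_sub_sub_cancel_right]
  have hrp' : ‖(r - c) - (p - c)‖ = s := by rwa [sub_sub_sub_cancel_right]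
  obtain ⟨hp, hpq_inner⟩ := norm_sq_and_inner_of_equilateral hpq' hqr' hrp' hsum
  obtain ⟨hq, -⟩ := norm_sq_and_inner_of_equilateral hqr' hrp' hpq' (by rw [← hsum]; abel)
  have hs : 0 ≤ s := hpq ▸ norm_nonneg _
  intro x hx
  rw [mem_closedBall, dist_eq_norm] at hx
  rcases hs.eq_or_lt with rfl | hs
  · obtain rfl : x = c := by simpa [sub_eq_zero] using hx
    have : p - c = 0 := by simpa using hp
    rw [← sub_eq_zero.mp this]
    exact subset_convexHull ℝ _ (by simp)
  have hind : LinearIndependent ℝ ![p - c, q - c] :=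
    linearIndependent_pair_of_inner (by rw [hp, hq, hpq_inner]; nlinarith [pow_pos hs 4])
  obtain ⟨a, b, hab⟩ := exists_smul_add_smul_eq_of_finrank_eq_two hV hind (x - c)
  have hnorm : ‖x - c‖ ^ 2 = s ^ 2 / 3 * (a ^ 2 - a * b + b ^ 2) := by
    rw [← hab, norm_add_sq_real, norm_smul, norm_smul, real_inner_smul_left,
      real_inner_smul_right, mul_pow, mul_pow, hp, hq, hpq_inner, Real.norm_eq_abs,
      Real.norm_eq_abs, sq_abs, sq_abs]
    ring
  have hquad : a ^ 2 - a * b + b ^ 2 ≤ 1 / 4 := by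
    have : ‖x - c‖ ^ 2 ≤ (s * √3 / 6) ^ 2 := pow_le_pow_left₀ (norm_nonneg _) hx 2
    rw [hnorm, div_pow, mul_pow, sq_sqrt (by norm_num)] at this
    nlinarith [pow_pos hs 2]
  have hx : x = (1 / 3 + (2 * a - b) / 3) • p + (1 / 3 + (2 * b - a) / 3) • q
      + (1 / 3 - (a + b) / 3) • r := by
    rw [← sub_eq_zero, ← sub_add_cancel x c, ← hab]
    simp only [c]
    module
  rw [hx]
  exact smul_add_smul_add_smul_mem_convexHull p q r (by nlinarith [sq_nonneg (a + b)])
    (by nlinarith [sq_nonneg (a + b)]) (by nlinarith [sq_nonneg (a - b)]) (by ring)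

end InnerProduct

theorem IsBisecting.closedBall_subset {K : Set (EuclideanSpace ℝ (Fin 2))}
    {p : EuclideanSpace ℝ (Fin 2)} (h : IsBisecting K p (π / 3) (1 / 2)) {t : ℝ}
    (ht₀ : 0 ≤ t) (ht₁ : √3 * t * ‖p‖ ≤ 1) :
    closedBall ((1 - t / 2) • p) (t * ‖p‖ / 4) ⊆ K := by
  obtain ⟨q, r, hpq, hpr, hqr, hq₀, hr₀, hsub⟩ := h
  rw [EuclideanGeometry.angle, vsub_eq_sub, vsub_eq_sub] at hqr hq₀ hr₀
  rw [zero_sub, show π / 3 / 2 = π / 6 by ring] at hq₀ hr₀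
  have hu : ‖q - p‖ = 1 / 2 := by rw [← dist_eq_norm, dist_comm, hpq]
  have hv : ‖r - p‖ = 1 / 2 := by rw [← dist_eq_norm, dist_comm, hpr]
  have huv : ⟪q - p, r - p⟫ = 1 / 8 := by
    rw [← InnerProductGeometry.cos_angle_mul_norm_mul_norm, hqr, hu, hv, cos_pi_div_three]
    norm_num
  have hu₀ : ⟪q - p, -p⟫ = √3 / 4 * ‖p‖ := by
    rw [← InnerProductGeometry.cos_angle_mul_norm_mul_norm, hq₀, hu, norm_neg, cos_pi_div_six]
    ring
  have hv₀ : ⟪r - p, -p⟫ = √3 / 4 * ‖p‖ := by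
    rw [← InnerProductGeometry.cos_angle_mul_norm_mul_norm, hr₀, hv, norm_neg, cos_pi_div_six]
    ring
  have hqr : dist q r = 1 / 2 := by
    rw [dist_eq_norm, ← sq_eq_sq₀ (norm_nonneg _) (by norm_num), ← sub_sub_sub_cancel_right q r p,
      norm_sub_sq_real, hu, hv, huv]
    norm_num
  have hsum : ‖(q - p) + (r - p)‖ = √3 / 2 := by
    rw [← sq_eq_sq₀ (norm_nonneg _) (by positivity), norm_add_sq_real, hu, hv, huv]
    norm_num [div_pow]
  -- Equality in Cauchy–Schwarz: the median from `p` points at the origin.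
  have haxis : ‖p‖ • ((q - p) + (r - p)) = (√3 / 2) • -p := by
    rw [← norm_neg p, ← hsum]
    refine inner_eq_norm_mul_iff_real.1 ?_
    rw [inner_add_left, hu₀, hv₀, hsum, norm_neg]
    ring
  have hin := closedBall_subset_convexHull_of_equilateral finrank_euclideanSpace_fin hpq hqr
    (by rw [dist_comm, hpr])
  have hapex : closedBall p 0 ⊆ convexHull ℝ {p, q, r} := by
    rw [closedBall_zero, Set.singleton_subset_iff]
    exact subset_convexHull ℝ _ (by simp)
  have h3 : √3 * √3 = 3 := mul_self_sqrt (by norm_num)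
  set s := √3 * t * ‖p‖ with hs
  have hcombo := (convex_convexHull ℝ _).closedBall_combo_subset le_rfl (by positivity) hapex hin
    (t := 1 - s) (by linarith) (sub_le_self _ (by positivity))
  have hcenter : (1 - s) • p + (1 - (1 - s)) • (1 / 3 : ℝ) • (p + q + r) = (1 - t / 2) • p := by
    rw [show (1 - s) • p + (1 - (1 - s)) • (1 / 3 : ℝ) • (p + q + r)
      = p + (√3 * t / 3) • (‖p‖ • ((q - p) + (r - p))) by rw [hs]; module, haxis]
    match_scalars
    linear_combination (-t / 6) * h3
  have hradius : (1 - s) * 0 + (1 - (1 - s)) * (1 / 2 * √3 / 6) = t * ‖p‖ / 4 := by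
    rw [hs]
    linear_combination (t * ‖p‖ / 12) * h3
  rw [hcenter, hradius] at hcombo
  exact hcombo.trans hsub

/-- For T ⊆ K ⊆ −2T with every boundary point of K (60°, 1/2)-bisecting, 0 < η ≤ 10⁻⁹, and
k = λk' with k' ∈ ∂K and λ ≥ 1/5, the ball B((1−η)k, η/100) is contained in
((1−η)/(1−η/2))·K. -/
theorem stmt_13 (v₁ v₂ v₃ : EuclideanSpace ℝ (Fin 2))
    (h12 : dist v₁ v₂ = 1) (h23 : dist v₂ v₃ = 1) (h31 : dist v₃ v₁ = 1)
    (hbary : v₁ + v₂ + v₃ = 0)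
    (K : Set (EuclideanSpace ℝ (Fin 2))) (hK : Convex ℝ K)
    (hTK : convexHull ℝ {v₁, v₂, v₃} ⊆ K)
    (hKT : K ⊆ (-2 : ℝ) • convexHull ℝ {v₁, v₂, v₃})
    (hbis : ∀ p ∈ frontier K, IsBisecting K p (π / 3) (1 / 2))
    (η : ℝ) (hη0 : 0 < η) (hη : η ≤ 1 / 10 ^ 9)
    (k k' : EuclideanSpace ℝ (Fin 2)) (lam : ℝ)
    (hk : k ∈ K) (hk' : k' ∈ frontier K) (hkl : k = lam • k') (hlam : 1 / 5 ≤ lam) :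
    Metric.closedBall ((1 - η) • k) (η / 100) ⊆ ((1 - η) / (1 - η / 2)) • K := by
  have hsqrt3 : 1 ≤ √3 ∧ √3 ≤ 2 :=
    ⟨by rw [Real.one_le_sqrt]; norm_num, by rw [Real.sqrt_le_left] <;> norm_num⟩
  have hT : closedBall 0 (√3 / 6) ⊆ K := by
    simpa [hbary] using
      (closedBall_subset_convexHull_of_equilateral finrank_euclideanSpace_fin h12 h23 h31).trans hTK
  have h₀ : 0 ∈ interior K := interior_mono hT (by
    rw [interior_closedBall _ (by positivity)]; exact mem_ball_self (by positivity))
  have hk'_ge : √3 / 6 ≤ ‖k'‖ := by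
    simpa using le_dist_of_closedBall_subset_of_mem_frontier hT hk'
  have hK2 : K ⊆ closedBall 0 2 :=
    calc K ⊆ (-2 : ℝ) • convexHull ℝ {v₁, v₂, v₃} := hKT
      _ ⊆ (-2 : ℝ) • closedBall 0 1 :=
        Set.smul_set_mono (convexHull_subset_closedBall_of_equilateral h12 h23 h31 hbary)
      _ = closedBall 0 2 := by rw [smul_closedBall _ _ zero_le_one]; norm_num
  have hk'_le : ‖k'‖ ≤ 2 := by
    simpa using closure_minimal hK2 isClosed_closedBall (frontier_subset_closure hk')
  have hlam1 : lam ≤ 1 := hK.le_one_of_smul_mem_of_mem_frontier h₀ hk' (hkl ▸ hk)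
  have hsmall : √3 * η * ‖k'‖ ≤ 1 := by
    nlinarith [mul_le_mul hsqrt3.2 hk'_le (norm_nonneg _) zero_le_two]
  have hball := hK.closedBall_combo_subset (by positivity) (by positivity)
    ((hbis k' hk').closedBall_subset hη0.le hsmall) hT (by linarith) hlam1
  rw [smul_zero, add_zero, smul_smul, mul_comm, ← smul_smul, ← hkl] at hball
  have hrad : η / 50 ≤ lam * (η * ‖k'‖ / 4) + (1 - lam) * (√3 / 6) := by
    have h₁ : η / 50 ≤ η * ‖k'‖ / 4 := by nlinarith
    have h₂ : η / 50 ≤ √3 / 6 := by linarith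
    nlinarith [mul_le_mul_of_nonneg_left h₁ (by linarith : 0 ≤ lam),
      mul_le_mul_of_nonneg_left h₂ (by linarith : 0 ≤ 1 - lam)]
  exact closedBall_subset_smul_of_closedBall_subset hη0.le (by linarith)
    ((closedBall_subset_closedBall hrad).trans hball)
end

section
/- Let p ∈ ∂C for a planar convex body C with o in its interior, and suppose there exist q, r ∈ C realizing p as (θ, ℓ)-good, i.e., |pq|, |pr| ≥ ℓ and ∠qpr ≥ 180° − θ. Let q', r' be points with |qq'| ≤ η·(2/√3) and |rr'| ≤ η·(2/√3), and let p' be a point with |pp'| ≤ η·(2/√3), where η ≤ (√3·ℓ/8)·sin(θ/2). Then |p'q'| ≥ ℓ/2, |p'r'| ≥ ℓ/2, and ∠q'p'r' ≥ 180° − 2θ; that is, q', r' realize p' as (2θ, ℓ/2)-good. -/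
/-!
Moving both endpoints of the segment `p x` by at most `δ` moves the vector `x - p` by at most
`2δ`; when `2δ ≤ ℓ sin s ≤ |px| sin s` this rotates it by at most `s`. Applied with `s = θ/2` to
`q` and `r`, the triangle inequality for angles between vectors loses at most `θ` from
`∠qpr ≥ π - θ`, and the length bounds are the triangle inequality for distances.
-/

open Real EuclideanGeometry
open scoped RealInnerProductSpace

namespace InnerProductGeometry

variable {V : Type*} [NormedAddCommGroup V] [InnerProductSpace ℝ V]

theorem angle_le_angle_add_angle_add_angle (x y x' y' : V) :
    angle x y ≤ angle x x' + angle x' y' + angle y y' := by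
  have hx := angle_le_angle_add_angle x x' y
  have hy := angle_le_angle_add_angle x' y' y
  rw [angle_comm y' y] at hy
  linarith

theorem angle_le_of_norm_sub_le_mul_sin {u v : V} {s : ℝ} (hu : u ≠ 0) (hs₀ : 0 ≤ s)
    (hs : s ≤ π / 2) (h : ‖u - v‖ ≤ ‖u‖ * sin s) : angle u v ≤ s := by
  have hu' : 0 < ‖u‖ := norm_pos_iff.2 hu
  have hcos : 0 ≤ cos s := cos_nonneg_of_mem_Icc ⟨by linarith [pi_pos], hs⟩
  have hsq : ‖u‖ ^ 2 - 2 * ⟪u, v⟫ + ‖v‖ ^ 2 ≤ ‖u‖ ^ 2 * (1 - cos s ^ 2) := by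
    rw [← norm_sub_sq_real, ← sin_sq]
    nlinarith [norm_nonneg (u - v)]
  rcases eq_or_ne v 0 with rfl | hv
  · -- `angle u 0 = π / 2`, and `‖u‖ ≤ ‖u‖ sin s` forces `s = π / 2`
    rw [angle_zero_right]
    by_contra! hlt
    have := cos_pos_of_mem_Ioo ⟨by linarith [pi_pos], hlt⟩
    simp only [inner_zero_right, norm_zero] at hsq
    nlinarith [mul_pos (pow_pos hu' 2) (pow_pos this 2)]
  -- AM-GM: `‖v‖² + ‖u‖² cos² s ≥ 2 ‖u‖ ‖v‖ cos s`
  have hinner : ‖u‖ * ‖v‖ * cos s ≤ ⟪u, v⟫ := by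
    nlinarith [sq_nonneg (‖v‖ - ‖u‖ * cos s)]
  have hcos_le : cos s ≤ cos (angle u v) := by
    rw [cos_angle, le_div_iff₀ (by positivity)]
    linarith
  by_contra! hlt
  linarith [cos_lt_cos_of_nonneg_of_le_pi hs₀ (angle_le_pi u v) hlt]

end InnerProductGeometry

namespace EuclideanGeometry

variable {V P : Type*} [NormedAddCommGroup V] [InnerProductSpace ℝ V] [MetricSpace P]
  [NormedAddTorsor V P]

theorem angle_vsub_vsub_le_of_dist_le {p x p' x' : P} {ℓ δ s : ℝ} (hℓ : 0 < ℓ)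
    (hpx : ℓ ≤ dist p x) (hp : dist p p' ≤ δ) (hx : dist x x' ≤ δ) (hs₀ : 0 ≤ s)
    (hs : s ≤ π / 2) (hδ : 2 * δ ≤ ℓ * sin s) :
    InnerProductGeometry.angle (x -ᵥ p) (x' -ᵥ p') ≤ s := by
  have hxp : x -ᵥ p ≠ 0 := by
    rw [vsub_ne_zero]
    rintro rfl
    rw [dist_self] at hpx
    linarith
  refine InnerProductGeometry.angle_le_of_norm_sub_le_mul_sin hxp hs₀ hs ?_
  calc ‖x -ᵥ p - (x' -ᵥ p')‖ = ‖(x -ᵥ x') - (p -ᵥ p')‖ := by rw [vsub_sub_vsub_comm]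
    _ ≤ dist x x' + dist p p' := by
      rw [dist_eq_norm_vsub V x, dist_eq_norm_vsub V p]
      exact norm_sub_le _ _
    _ ≤ ℓ * sin s := by linarith
    _ ≤ ‖x -ᵥ p‖ * sin s := by
      rw [← dist_eq_norm_vsub V, dist_comm]
      exact mul_le_mul_of_nonneg_right hpx (sin_nonneg_of_nonneg_of_le_pi hs₀ (by linarith))

end EuclideanGeometry

theorem stmt_16_general (p q r p' q' r' : EuclideanSpace ℝ (Fin 2)) (θ ℓ η : ℝ)
    (hθ0 : 0 < θ) (hθ : θ ≤ π / 4) (hℓ : 0 < ℓ)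
    (hη : η ≤ Real.sqrt 3 * ℓ / 8 * Real.sin (θ / 2))
    (hpq : ℓ ≤ dist p q) (hpr : ℓ ≤ dist p r)
    (hangle : π - θ ≤ EuclideanGeometry.angle q p r)
    (hq' : dist q q' ≤ η * (2 / Real.sqrt 3))
    (hr' : dist r r' ≤ η * (2 / Real.sqrt 3))
    (hp' : dist p p' ≤ η * (2 / Real.sqrt 3)) :
    ℓ / 2 ≤ dist p' q' ∧ ℓ / 2 ≤ dist p' r' ∧
      π - 2 * θ ≤ EuclideanGeometry.angle q' p' r' := by
  set δ := η * (2 / √3)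
  have hδ : 4 * δ ≤ ℓ * sin (θ / 2) := by
    have hscale : √3 * ℓ / 8 * sin (θ / 2) * (2 / √3) = ℓ * sin (θ / 2) / 4 := by
      field_simp
      ring
    linarith [mul_le_mul_of_nonneg_right hη (by positivity : (0 : ℝ) ≤ 2 / √3)]
  have hδℓ : 4 * δ ≤ ℓ := hδ.trans (mul_le_of_le_one_right hℓ.le (sin_le_one _))
  have hδ₀ : 0 ≤ δ := dist_nonneg.trans hp'
  have hθ₀ : 0 ≤ θ / 2 := by linarith
  have hθπ : θ / 2 ≤ π / 2 := by linarith [pi_pos]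
  have hq_rot := angle_vsub_vsub_le_of_dist_le hℓ hpq hp' hq' hθ₀ hθπ (by linarith)
  have hr_rot := angle_vsub_vsub_le_of_dist_le hℓ hpr hp' hr' hθ₀ hθπ (by linarith)
  have htri := InnerProductGeometry.angle_le_angle_add_angle_add_angle
    (q -ᵥ p) (r -ᵥ p) (q' -ᵥ p') (r' -ᵥ p')
  refine ⟨?_, ?_, ?_⟩
  · linarith [dist_triangle4 p p' q' q, dist_comm q q']
  · linarith [dist_triangle4 p p' r' r, dist_comm r r']
  · unfold EuclideanGeometry.angle at hangle ⊢
    linarith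

/-- Perturbation of (θ, ℓ)-good points: if q, r ∈ C realize p ∈ ∂C as (θ, ℓ)-good
(|pq|, |pr| ≥ ℓ, ∠qpr ≥ 180° − θ), and p', q', r' are perturbations of p, q, r by at most
η·(2/√3) with η ≤ (√3·ℓ/8)·sin(θ/2), then |p'q'|, |p'r'| ≥ ℓ/2 and ∠q'p'r' ≥ 180° − 2θ. -/
theorem stmt_16 (C : Set (EuclideanSpace ℝ (Fin 2))) (hC : Convex ℝ C)
    (h0 : (0 : EuclideanSpace ℝ (Fin 2)) ∈ interior C)
    (p q r p' q' r' : EuclideanSpace ℝ (Fin 2)) (θ ℓ η : ℝ)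
    (hθ0 : 0 < θ) (hθ : θ ≤ π / 4) (hℓ : 0 < ℓ) (hη0 : 0 ≤ η)
    (hη : η ≤ Real.sqrt 3 * ℓ / 8 * Real.sin (θ / 2))
    (hp : p ∈ frontier C) (hq : q ∈ C) (hr : r ∈ C)
    (hpq : ℓ ≤ dist p q) (hpr : ℓ ≤ dist p r)
    (hangle : π - θ ≤ EuclideanGeometry.angle q p r)
    (hq' : dist q q' ≤ η * (2 / Real.sqrt 3))
    (hr' : dist r r' ≤ η * (2 / Real.sqrt 3))
    (hp' : dist p p' ≤ η * (2 / Real.sqrt 3)) :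
    ℓ / 2 ≤ dist p' q' ∧ ℓ / 2 ≤ dist p' r' ∧
      π - 2 * θ ≤ EuclideanGeometry.angle q' p' r' :=
  stmt_16_general p q r p' q' r' θ ℓ η hθ0 hθ hℓ hη hpq hpr hangle hq' hr' hp'
end
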